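/- Let Γ be a finite connected distance-regular simple graph with vertex set V. Then for every base point v0 ∈ V and every k ∈ I, the matrix identity P_k · D = D · A_k holds. -/

import Mathlib

open Finset

noncomputable section

/-- The sphere of radius `k` around `v`: all vertices at graph distance `k` from `v`. -/
def sph {V : Type*} [Fintype V] (G : SimpleGraph V) (k : ℕ) (v : V) : Finset V :=
  Finset.univ.filter fun w => G.dist v w = k

/-- Eccentricity of a vertex. -/
def ecc {V : Type*} [Fintype V] (G : SimpleGraph V) (v : V) : ℕ :=
  Finset.univ.sup fun w => G.dist v w

/-- Diameter of the graph. -/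
def gdiam {V : Type*} [Fintype V] (G : SimpleGraph V) : ℕ :=
  Finset.univ.sup fun v => ecc G v

/-- The `k`-adjacency matrix `A^(k)`. -/
def Adjk {V : Type*} [Fintype V] (G : SimpleGraph V) (k : ℕ) : Matrix V V ℝ :=
  Matrix.of fun x y => if G.dist x y = k then (1 : ℝ) else 0

/-- The normalized `k`-adjacency matrix `A_k = (1/μ_k) A^(k)`. -/
def Anorm {V : Type*} [Fintype V] (G : SimpleGraph V) (v0 : V) (k : ℕ) : Matrix V V ℝ :=
  (((sph G k v0).card : ℝ))⁻¹ • Adjk G k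

/-- The structure constant `p_{i,j}^k` of the random walk on `(Γ, v0)`. -/
def pcoef {V : Type*} [Fintype V] [DecidableEq V] (G : SimpleGraph V) (v0 : V)
    (i j k : ℕ) : ℝ :=
  (1 / ((sph G i v0).card : ℝ)) *
    ∑ v ∈ sph G i v0, ((sph G j v ∩ sph G k v0).card : ℝ) / ((sph G j v).card : ℝ)

/-- The matrix `D : I × V`, with `(i,v)`-entry `1` if `d(v0,v) = i` and `0` otherwise. -/
def Dmat {V : Type*} [Fintype V] (G : SimpleGraph V) (v0 : V) :
    Matrix (Fin (gdiam G + 1)) V ℝ :=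
  Matrix.of fun i v => if G.dist v0 v = (i : ℕ) then (1 : ℝ) else 0

/-- The `k`-transition matrix `P_k`, with `(i,j)`-entry `p_{k,j}^i`. -/
def Pmat {V : Type*} [Fintype V] [DecidableEq V] (G : SimpleGraph V) (v0 : V) (k : ℕ) :
    Matrix (Fin (gdiam G + 1)) (Fin (gdiam G + 1)) ℝ :=
  Matrix.of fun i j => pcoef G v0 k (j : ℕ) (i : ℕ)

lemma mem_sph {V : Type*} [Fintype V] (G : SimpleGraph V) {a : ℕ} {v w : V} :
    w ∈ sph G a v ↔ G.dist v w = a := by simp [sph]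

/-- double-counting swap -/
lemma swap_sum {V : Type*} [Fintype V] [DecidableEq V] (G : SimpleGraph V) (v0 : V)
    (a b c : ℕ) :
    ∑ u ∈ sph G a v0, (sph G b u ∩ sph G c v0).card
      = ∑ x ∈ sph G c v0, (sph G b x ∩ sph G a v0).card := by
  have key : ∀ (p : ℕ) (u : V), (sph G b u ∩ sph G p v0).card
      = ∑ x ∈ sph G p v0, if G.dist u x = b then 1 else 0 := by
    intro p u
    rw [← Finset.card_filter]
    congr 1
    ext x
    simp [sph, and_comm]
  calc ∑ u ∈ sph G a v0, (sph G b u ∩ sph G c v0).card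
      = ∑ u ∈ sph G a v0, ∑ x ∈ sph G c v0, if G.dist u x = b then 1 else 0 := by
        simp_rw [key]
    _ = ∑ x ∈ sph G c v0, ∑ u ∈ sph G a v0, if G.dist x u = b then 1 else 0 := by
        rw [Finset.sum_comm]; simp_rw [SimpleGraph.dist_comm]
    _ = ∑ x ∈ sph G c v0, (sph G b x ∩ sph G a v0).card := by simp_rw [key]

theorem stmt7 {V : Type*} [Fintype V] [DecidableEq V] (G : SimpleGraph V)
    (hconn : G.Connected)
    (hdr : ∀ i j k : ℕ, ∀ v w v' w' : V, G.dist v w = k → G.dist v' w' = k →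
      (sph G i v ∩ sph G j w).card = (sph G i v' ∩ sph G j w').card) :
    ∀ v0 : V, ∀ k : ℕ, k ≤ gdiam G →
      Pmat G v0 k * Dmat G v0 = Dmat G v0 * Anorm G v0 k := by
  intro v0 k _hk
  ext i v
  set j0 : ℕ := G.dist v0 v with hj0
  have hj0le : j0 ≤ gdiam G := by
    have h1 : j0 ≤ ecc G v0 := Finset.le_sup (f := fun w => G.dist v0 w) (Finset.mem_univ v)
    have h2 : ecc G v0 ≤ gdiam G := Finset.le_sup (f := fun u => ecc G u) (Finset.mem_univ v0)
    exact le_trans h1 h2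
  have hvmem : v ∈ sph G j0 v0 := mem_sph G |>.mpr rfl
  have hμj0 : ((sph G j0 v0).card : ℝ) ≠ 0 := by
    exact_mod_cast Finset.card_ne_zero_of_mem hvmem
  -- LHS
  have hLHS : (Pmat G v0 k * Dmat G v0) i v = pcoef G v0 k j0 i := by
    rw [Matrix.mul_apply]
    rw [Finset.sum_eq_single (⟨j0, Nat.lt_succ_of_le hj0le⟩ : Fin (gdiam G + 1))]
    · simp [Pmat, Dmat, hj0]
    · intro b _ hb
      have : G.dist v0 v ≠ (b : ℕ) := by
        intro h
        apply hb
        exact Fin.ext (by simpa [hj0] using h.symm)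
      simp [Dmat, this]
    · simp
  -- RHS
  have hRHS : (Dmat G v0 * Anorm G v0 k) i v
      = ((sph G k v0).card : ℝ)⁻¹ * ((sph G k v ∩ sph G (i : ℕ) v0).card : ℝ) := by
    rw [Matrix.mul_apply]
    have : ∀ w : V, Dmat G v0 i w * Anorm G v0 k w v
        = ((sph G k v0).card : ℝ)⁻¹ * (if w ∈ sph G k v ∩ sph G (i : ℕ) v0 then 1 else 0) := by
      intro w
      simp only [Dmat, Anorm, Adjk, Matrix.smul_apply, Matrix.of_apply, smul_eq_mul,
        Finset.mem_inter, mem_sph]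
      rw [SimpleGraph.dist_comm (u := w) (v := v)]
      by_cases h1 : G.dist v0 w = (i : ℕ) <;> by_cases h2 : G.dist v w = k <;>
        simp [h1, h2]
    simp_rw [this, ← Finset.mul_sum, Finset.sum_ite_mem, Finset.univ_inter,
      Finset.sum_const, nsmul_eq_mul, mul_one]
  rw [hLHS, hRHS]
  -- core identity
  have hconst : ∀ u ∈ sph G k v0, ((sph G j0 u).card : ℝ) = ((sph G j0 v0).card : ℝ) := by
    intro u _
    have := hdr j0 j0 0 u u v0 v0 (by simp) (by simp)
    simpa [Finset.inter_self] using this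
  have hT : ∑ u ∈ sph G k v0, (sph G j0 u ∩ sph G (i : ℕ) v0).card
      = (sph G j0 v0).card * (sph G k v ∩ sph G (i : ℕ) v0).card := by
    rw [swap_sum]
    have h1 : ∀ x ∈ sph G (i : ℕ) v0, (sph G j0 x ∩ sph G k v0).card
        = (sph G k x ∩ sph G j0 v0).card := by
      intro x hx
      have hx' : G.dist v0 x = (i : ℕ) := mem_sph G |>.mp hx
      have hx'' : G.dist x v0 = (i : ℕ) := by rwa [SimpleGraph.dist_comm] at hx'
      have := hdr j0 k (i : ℕ) x v0 v0 x hx'' hx'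
      rw [this, Finset.inter_comm]
    rw [Finset.sum_congr rfl h1, swap_sum]
    have h2 : ∀ y ∈ sph G j0 v0, (sph G k y ∩ sph G (i : ℕ) v0).card
        = (sph G k v ∩ sph G (i : ℕ) v0).card := by
      intro y hy
      have hy' : G.dist y v0 = j0 := by
        rw [SimpleGraph.dist_comm]; exact mem_sph G |>.mp hy
      have hv' : G.dist v v0 = j0 := by rw [SimpleGraph.dist_comm]
      exact hdr k (i : ℕ) j0 y v0 v v0 hy' hv'
    rw [Finset.sum_congr rfl h2, Finset.sum_const, smul_eq_mul]
  -- finish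
  unfold pcoef
  rw [Finset.sum_congr rfl (fun u hu => by rw [hconst u hu])]
  rw [← Finset.sum_div, ← Nat.cast_sum, hT]
  push_cast
  rw [one_div]
  field_simp


end
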